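/- arXiv:1706.02518 — 3 statements merged into one kernel-verified Lean document; each statement's English description precedes it below -/
import Mathlib

section
/- For every prime p and every even integer n > 1, s(n) ≥ (1/2) p^(n/2) · s(n-1), where s(m) is the number of subspaces of F_p^m. -/
open Module

section aux
variable {K : Type*} [Field K] {V : Type*} [AddCommGroup V] [Module K V]

noncomputable def phi1 : (Σ W : Submodule K V, Option (Module.Dual K ↥W)) → Submodule K (V × K)
  | ⟨W, none⟩ => W.prod ⊤
  | ⟨W, some f⟩ => LinearMap.range (W.subtype.prod f)

noncomputable def phi2 : (Σ W : Submodule K V, Option (V ⧸ W)) → Submodule K (V × K)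
  | ⟨W, none⟩ => W.prod ⊥
  | ⟨W, some q⟩ =>
      Submodule.comap (LinearMap.fst K V K - (LinearMap.snd K V K).smulRight q.out) W

lemma phi1_fst (a : Σ W : Submodule K V, Option (Module.Dual K ↥W)) :
    (phi1 a).map (LinearMap.fst K V K) = a.1 := by
  obtain ⟨W, _ | f⟩ := a
  · ext x
    simp only [phi1, Submodule.mem_map, Submodule.mem_prod, Submodule.mem_top, and_true,
      LinearMap.fst_apply]
    exact ⟨fun ⟨y, hy, h⟩ => h ▸ hy, fun h => ⟨(x, 0), h, rfl⟩⟩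
  · ext x
    simp only [phi1, Submodule.mem_map, LinearMap.mem_range, LinearMap.prod_apply,
      LinearMap.fst_apply, Pi.prod, Submodule.coe_subtype]
    constructor
    · rintro ⟨y, ⟨w, rfl⟩, h⟩
      exact h ▸ w.2
    · intro hx
      exact ⟨(x, f ⟨x, hx⟩), ⟨⟨x, hx⟩, rfl⟩, rfl⟩

lemma phi1_inj : Function.Injective (phi1 (K := K) (V := V)) := by
  rintro ⟨W, a⟩ ⟨W', a'⟩ h
  have hW : W = W' := by
    have := congrArg (Submodule.map (LinearMap.fst K V K)) h
    rwa [phi1_fst, phi1_fst] at this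
  subst hW
  obtain _ | f := a <;> obtain _ | g := a'
  · rfl
  · exfalso
    have h01 : ((0 : V), (1 : K)) ∈ phi1 ⟨W, none⟩ := by
      simp [phi1, Submodule.zero_mem]
    rw [h] at h01
    obtain ⟨w, hw⟩ := h01
    have hw1 : (w : V) = 0 := congrArg Prod.fst hw
    have hw2 : g w = 1 := congrArg Prod.snd hw
    have : w = 0 := Subtype.ext hw1
    rw [this, map_zero] at hw2
    exact one_ne_zero hw2.symm
  · exfalso
    have h01 : ((0 : V), (1 : K)) ∈ phi1 ⟨W, none⟩ := by
      simp [phi1, Submodule.zero_mem]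
    rw [← h] at h01
    obtain ⟨w, hw⟩ := h01
    have hw1 : (w : V) = 0 := congrArg Prod.fst hw
    have hw2 : f w = 1 := congrArg Prod.snd hw
    have : w = 0 := Subtype.ext hw1
    rw [this, map_zero] at hw2
    exact one_ne_zero hw2.symm
  · suffices hfg : f = g by rw [hfg]
    apply LinearMap.ext
    intro w
    have hmem : ((w : V), f w) ∈ phi1 ⟨W, some f⟩ := ⟨w, rfl⟩
    rw [h] at hmem
    obtain ⟨w', hw'⟩ := hmem
    have hw1 : (w' : V) = (w : V) := congrArg Prod.fst hw'
    have hw2 : g w' = f w := congrArg Prod.snd hw'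
    rw [Subtype.ext hw1] at hw2
    exact hw2.symm

lemma phi2_mem (W : Submodule K V) (q : V ⧸ W) (x : V) (c : K) :
    (x, c) ∈ phi2 ⟨W, some q⟩ ↔ x - c • q.out ∈ W := by
  simp [phi2, Submodule.mem_comap, LinearMap.sub_apply]

lemma phi2_inl (a : Σ W : Submodule K V, Option (V ⧸ W)) :
    (phi2 a).comap (LinearMap.inl K V K) = a.1 := by
  obtain ⟨W, _ | q⟩ := a
  · ext x; simp [phi2]
  · ext x; simp [phi2]

lemma phi2_inj : Function.Injective (phi2 (K := K) (V := V)) := by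
  rintro ⟨W, a⟩ ⟨W', a'⟩ h
  have hW : W = W' := by
    have := congrArg (Submodule.comap (LinearMap.inl K V K)) h
    rwa [phi2_inl, phi2_inl] at this
  subst hW
  obtain _ | q := a <;> obtain _ | q' := a'
  · rfl
  · exfalso
    have h1 : ((q'.out : V), (1 : K)) ∈ phi2 ⟨W, some q'⟩ := by
      rw [phi2_mem]; simp
    rw [← h] at h1
    exact one_ne_zero (h1.2)
  · exfalso
    have h1 : ((q.out : V), (1 : K)) ∈ phi2 ⟨W, some q⟩ := by
      rw [phi2_mem]; simp
    rw [h] at h1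
    exact one_ne_zero (h1.2)
  · congr 1
    have h1 : ((q.out : V), (1 : K)) ∈ phi2 ⟨W, some q⟩ := by
      rw [phi2_mem]; simp
    rw [h, phi2_mem, one_smul] at h1
    have : Submodule.Quotient.mk (p := W) q.out = Submodule.Quotient.mk q'.out :=
      (Submodule.Quotient.eq W).mpr h1
    rw [← Submodule.Quotient.mk''_eq_mk, ← Submodule.Quotient.mk''_eq_mk,
      Quotient.out_eq', Quotient.out_eq'] at this
    rw [this]

end aux


section count
variable (K : Type*) [Field K] [Fintype K] (V : Type*) [AddCommGroup V] [Module K V] [Fintype V]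

lemma nat_card_module (M : Type*) [AddCommGroup M] [Module K M] [Finite M] :
    Nat.card M = Fintype.card K ^ finrank K M := by
  have : Fintype M := Fintype.ofFinite M
  rw [Nat.card_eq_fintype_card]
  exact card_eq_pow_finrank

lemma main_ineq (t : ℕ) (ht : finrank K V + 1 = t + t) :
    Fintype.card K ^ t * Nat.card (Submodule K V) ≤ 2 * Nat.card (Submodule K (V × K)) := by
  classical
  haveI : ∀ W : Submodule K V, Finite (Module.Dual K ↥W) := fun W =>
    Finite.of_injective (fun f => (f : ↥W → K)) DFunLike.coe_injective
  haveI : ∀ W : Submodule K V, Fintype (Module.Dual K ↥W) := fun W => Fintype.ofFinite _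
  haveI : ∀ W : Submodule K V, Fintype (V ⧸ W) := fun W => Fintype.ofFinite _
  set q := Fintype.card K with hq
  have hq2 : 2 ≤ q := Fintype.one_lt_card
  -- cardinalities of the sigma types
  have c1 : Nat.card (Σ W : Submodule K V, Option (Module.Dual K ↥W))
      = ∑ W : Submodule K V, (q ^ finrank K ↥W + 1) := by
    rw [Nat.card_eq_fintype_card, Fintype.card_sigma]
    refine Finset.sum_congr rfl fun W _ => ?_
    rw [Fintype.card_option, ← Nat.card_eq_fintype_card, nat_card_module K _,
      Subspace.dual_finrank_eq]
  have c2 : Nat.card (Σ W : Submodule K V, Option (V ⧸ W))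
      = ∑ W : Submodule K V, (q ^ (finrank K V - finrank K ↥W) + 1) := by
    rw [Nat.card_eq_fintype_card, Fintype.card_sigma]
    refine Finset.sum_congr rfl fun W _ => ?_
    rw [Fintype.card_option, ← Nat.card_eq_fintype_card, nat_card_module K _]
    congr 2
    have := Submodule.finrank_quotient_add_finrank W
    omega
  have h1 : Nat.card (Σ W : Submodule K V, Option (Module.Dual K ↥W))
      ≤ Nat.card (Submodule K (V × K)) :=
    Nat.card_le_card_of_injective _ phi1_inj
  have h2 : Nat.card (Σ W : Submodule K V, Option (V ⧸ W))
      ≤ Nat.card (Submodule K (V × K)) :=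
    Nat.card_le_card_of_injective _ phi2_inj
  have key : ∀ W : Submodule K V,
      q ^ t ≤ (q ^ finrank K ↥W + 1) + (q ^ (finrank K V - finrank K ↥W) + 1) := by
    intro W
    have hle : finrank K ↥W ≤ finrank K V := Submodule.finrank_le W
    rcases le_or_gt t (finrank K ↥W) with h | h
    · have := Nat.pow_le_pow_right (le_trans one_le_two hq2) h
      omega
    · have ht2 : t ≤ finrank K V - finrank K ↥W := by omega
      have := Nat.pow_le_pow_right (le_trans one_le_two hq2) ht2
      omega
  calc q ^ t * Nat.card (Submodule K V)
      = ∑ _W : Submodule K V, q ^ t := by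
        rw [Finset.sum_const, Nat.card_eq_fintype_card, Finset.card_univ, mul_comm, smul_eq_mul]
    _ ≤ ∑ W : Submodule K V, ((q ^ finrank K ↥W + 1) + (q ^ (finrank K V - finrank K ↥W) + 1)) :=
        Finset.sum_le_sum fun W _ => key W
    _ = (∑ W : Submodule K V, (q ^ finrank K ↥W + 1))
        + ∑ W : Submodule K V, (q ^ (finrank K V - finrank K ↥W) + 1) := Finset.sum_add_distrib
    _ ≤ 2 * Nat.card (Submodule K (V × K)) := by
        rw [← c1, ← c2]; omega

end count

/-- `numSubspaces p m` is the total number of subspaces of an `m`-dimensional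
vector space over `𝔽_p`. -/
noncomputable def numSubspaces (p m : ℕ) : ℕ :=
  Nat.card (Submodule (ZMod p) (Fin m → ZMod p))

theorem numSubspaces_ge_even (p n : ℕ) (hp : p.Prime) (hn : 1 < n) (hev : Even n) :
    p ^ (n / 2) * numSubspaces p (n - 1) ≤ 2 * numSubspaces p n := by
  haveI : Fact p.Prime := ⟨hp⟩
  obtain ⟨t, rfl⟩ := hev
  have ht1 : 1 ≤ t := by omega
  have hdiv : (t + t) / 2 = t := by omega
  set K := ZMod p with hK
  have hfr : finrank K (Fin (t + t) → K) = finrank K ((Fin (t + t - 1) → K) × K) := by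
    simp only [Module.finrank_pi, Module.finrank_prod, Module.finrank_self, Fintype.card_fin]
    omega
  have e : (Fin (t + t) → K) ≃ₗ[K] (Fin (t + t - 1) → K) × K := LinearEquiv.ofFinrankEq _ _ hfr
  have hcard : numSubspaces p (t + t) = Nat.card (Submodule K ((Fin (t + t - 1) → K) × K)) :=
    Nat.card_congr (Submodule.orderIsoMapComap e).toEquiv
  rw [hcard, hdiv]
  have hp' : Fintype.card K = p := ZMod.card p
  have := main_ineq K (Fin (t + t - 1) → K) t
    (by simp only [Module.finrank_pi, Fintype.card_fin]; omega)
  rw [hp'] at this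
  exact this
end

section
/- For every prime p and every odd integer n > 0, s(n) ≥ p^((n-1)/2) · s(n-1), where s(m) is the number of subspaces of F_p^m. -/
open Submodule Module

section aux

variable {K : Type*} [Field K] {N : ℕ}

/-- Extend a vector by a final zero coordinate, as a linear map. -/
noncomputable def extSnoc (K : Type*) [Field K] (N : ℕ) :
    (Fin N → K) →ₗ[K] (Fin (N+1) → K) where
  toFun v := Fin.snoc v 0
  map_add' u v := by
    funext i
    refine Fin.lastCases ?_ (fun j => ?_) i <;> simp
  map_smul' c v := by
    funext i
    refine Fin.lastCases ?_ (fun j => ?_) i <;> simp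

lemma extSnoc_injective : Function.Injective (extSnoc K N) := by
  intro u v h
  funext j
  have := congrFun h (Fin.castSucc j)
  simpa [extSnoc] using this

lemma last_eq_zero_of_mem_map {W : Submodule K (Fin N → K)} {u : Fin (N+1) → K}
    (hu : u ∈ W.map (extSnoc K N)) : u (Fin.last N) = 0 := by
  obtain ⟨v, -, rfl⟩ := hu
  simp [extSnoc]

/-- The subspace spanned by (the extension of) `W` and the vector `snoc w 1`. -/
noncomputable def FSub (W : Submodule K (Fin N → K)) (w : Fin N → K) :
    Submodule K (Fin (N+1) → K) :=
  W.map (extSnoc K N) ⊔ K ∙ (Fin.snoc w 1)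

lemma snoc_sub_snoc (w w' : Fin N → K) :
    (Fin.snoc w 1 : Fin (N+1) → K) - Fin.snoc w' 1 = extSnoc K N (w - w') := by
  funext i
  refine Fin.lastCases ?_ (fun j => ?_) i <;> simp [extSnoc]

lemma snoc_mem_FSub (W : Submodule K (Fin N → K)) (w : Fin N → K) :
    (Fin.snoc w 1 : Fin (N+1) → K) ∈ FSub W w :=
  mem_sup_right (mem_span_singleton_self _)

lemma FSub_congr {W : Submodule K (Fin N → K)} {w w' : Fin N → K} (h : w - w' ∈ W) :
    FSub W w = FSub W w' := by
  have key : ∀ a b : Fin N → K, a - b ∈ W → FSub W a ≤ FSub W b := by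
    intro a b hab
    refine sup_le (le_sup_left.trans le_rfl) ?_
    rw [span_le, Set.singleton_subset_iff]
    have : (Fin.snoc a 1 : Fin (N+1) → K) = extSnoc K N (a - b) + Fin.snoc b 1 := by
      rw [← snoc_sub_snoc]; abel
    rw [this]
    exact add_mem (mem_sup_left ⟨a - b, hab, rfl⟩) (snoc_mem_FSub W b)
  exact le_antisymm (key w w' h) (key w' w (by simpa using W.neg_mem h))

lemma mem_map_of_mem_FSub {W : Submodule K (Fin N → K)} {w : Fin N → K} {u : Fin (N+1) → K}
    (hu : u ∈ FSub W w) (h0 : u (Fin.last N) = 0) : u ∈ W.map (extSnoc K N) := by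
  obtain ⟨a, ha, b, hb, rfl⟩ := mem_sup.mp hu
  obtain ⟨c, rfl⟩ := mem_span_singleton.mp hb
  have hlast : (a + c • (Fin.snoc w 1 : Fin (N+1) → K)) (Fin.last N) = c := by
    simp [last_eq_zero_of_mem_map ha]
  rw [h0] at hlast
  rw [← hlast]
  simpa using ha

/-- The injection from pairs (subspace of `K^N`, optional coset) to subspaces of `K^(N+1)`. -/
noncomputable def Phi (K : Type*) [Field K] (N : ℕ) :
    (Σ W : Submodule K (Fin N → K), Option ((Fin N → K) ⧸ W)) →
      Submodule K (Fin (N+1) → K) :=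
  fun x => x.2.elim (x.1.map (extSnoc K N))
    (fun q => Quotient.liftOn' q (FSub x.1)
      (fun a b hab => FSub_congr ((Submodule.quotientRel_def x.1).mp hab)))

lemma Phi_injective : Function.Injective (Phi K N) := by
  rintro ⟨W, x⟩ ⟨W', x'⟩ h
  have hone : (1 : K) ≠ 0 := one_ne_zero
  -- helper : FSub is not contained in the hyperplane
  match x, x' with
  | none, none =>
    simp only [Phi, Option.elim] at h
    have : W = W' := map_injective_of_injective extSnoc_injective h
    subst this; rfl
  | none, some q' =>
    induction q' using Quotient.inductionOn' with
    | h w' =>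
      simp only [Phi, Option.elim, Quotient.liftOn'_mk''] at h
      exfalso
      have := snoc_mem_FSub W' w'
      rw [← h] at this
      have := last_eq_zero_of_mem_map this
      simp at this
  | some q, none =>
    induction q using Quotient.inductionOn' with
    | h w =>
      simp only [Phi, Option.elim, Quotient.liftOn'_mk''] at h
      exfalso
      have := snoc_mem_FSub W w
      rw [h] at this
      have := last_eq_zero_of_mem_map this
      simp at this
  | some q, some q' =>
    induction q using Quotient.inductionOn' with
    | h w =>
    induction q' using Quotient.inductionOn' with
    | h w' =>
      simp only [Phi, Option.elim] at h
      have h2 : FSub W w = FSub W' w' := by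
        rwa [Quotient.liftOn'_mk'', Quotient.liftOn'_mk''] at h
      have hWW' : W = W' := by
        apply map_injective_of_injective (extSnoc_injective (K := K) (N := N))
        apply le_antisymm
        · intro u hu
          exact mem_map_of_mem_FSub (h2.le (mem_sup_left hu))
            (last_eq_zero_of_mem_map hu)
        · intro u hu
          exact mem_map_of_mem_FSub (h2.ge (mem_sup_left hu))
            (last_eq_zero_of_mem_map hu)
      subst hWW'
      have hmem : (Fin.snoc w 1 : Fin (N+1) → K) ∈ FSub W w' := h2 ▸ snoc_mem_FSub W w
      obtain ⟨a, ha, b, hb, hab⟩ := mem_sup.mp hmem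
      obtain ⟨c, rfl⟩ := mem_span_singleton.mp hb
      have hc : c = 1 := by
        have := congrFun hab (Fin.last N)
        simpa [last_eq_zero_of_mem_map ha] using this
      subst hc
      have hsub : (Fin.snoc w 1 : Fin (N+1) → K) - Fin.snoc w' 1 ∈ W.map (extSnoc K N) := by
        rw [← hab]; simpa using ha
      rw [snoc_sub_snoc] at hsub
      obtain ⟨v, hv, hv'⟩ := hsub
      have : w - w' ∈ W := by
        rwa [extSnoc_injective hv'] at hv
      have : (Quotient.mk'' w : (Fin N → K) ⧸ W) = Quotient.mk'' w' := by
        exact Quotient.sound' ((Submodule.quotientRel_def W).mpr this)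
      simp [this]

end aux

lemma amgm_pow (p e m : ℕ) (hp : 0 < p) : 2 * p ^ (e + m) ≤ p ^ (2 * e + m) + p ^ m := by
  have hx : 2 * p ^ e ≤ p ^ e * p ^ e + 1 := by
    zify
    nlinarith [sq_nonneg ((p:ℤ) ^ e - 1)]
  have h2 : (2 * p ^ e) * p ^ m ≤ (p ^ e * p ^ e + 1) * p ^ m :=
    Nat.mul_le_mul_right _ hx
  calc 2 * p ^ (e + m) = (2 * p ^ e) * p ^ m := by rw [pow_add]; ring
    _ ≤ (p ^ e * p ^ e + 1) * p ^ m := h2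
    _ = p ^ (2 * e + m) + p ^ m := by rw [pow_add, pow_mul, pow_two]; ring

theorem numSubspaces_ge_odd (p n : ℕ) (hp : p.Prime) (hn : 0 < n) (hodd : Odd n) :
    p ^ ((n - 1) / 2) * numSubspaces p (n - 1) ≤ numSubspaces p n := by
  haveI : Fact p.Prime := ⟨hp⟩
  obtain ⟨k, hk⟩ := hodd
  subst hk
  rw [show 2 * k + 1 - 1 = 2 * k by omega,
    Nat.mul_div_cancel_left k (by norm_num)]
  set K := ZMod p with hK
  set V := (Fin (2 * k) → K) with hV
  haveI : Finite (Submodule K V) :=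
    Finite.of_injective (fun W : Submodule K V => (W : Set V)) SetLike.coe_injective
  haveI : Finite (Submodule K (Fin (2 * k + 1) → K)) :=
    Finite.of_injective
      (fun W : Submodule K (Fin (2 * k + 1) → K) => (W : Set (Fin (2 * k + 1) → K)))
      SetLike.coe_injective
  letI : Fintype (Submodule K V) := Fintype.ofFinite _
  letI : ∀ W : Submodule K V, Fintype (V ⧸ W) := fun W => Fintype.ofFinite _
  -- the injection
  have hinj : Nat.card (Σ W : Submodule K V, Option (V ⧸ W)) ≤ numSubspaces p (2 * k + 1) :=
    Nat.card_le_card_of_injective (Phi K (2 * k)) Phi_injective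
  -- cardinality of the sigma type
  have hfr : Module.finrank K V = 2 * k := Module.finrank_fin_fun K
  have hquot : ∀ W : Submodule K V,
      Fintype.card (V ⧸ W) = p ^ (2 * k - Module.finrank K W) := by
    intro W
    have h1 : Fintype.card (V ⧸ W) = Fintype.card K ^ Module.finrank K (V ⧸ W) :=
      card_eq_pow_finrank
    have h2 := Submodule.finrank_quotient_add_finrank W
    rw [hfr] at h2
    rw [h1, ZMod.card]
    congr 1
    omega
  have hsigma : Nat.card (Σ W : Submodule K V, Option (V ⧸ W)) =
      (∑ W : Submodule K V, p ^ (2 * k - Module.finrank K W)) +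
        Fintype.card (Submodule K V) := by
    rw [Nat.card_eq_fintype_card, Fintype.card_sigma]
    simp only [Fintype.card_option, hquot]
    rw [Finset.sum_add_distrib, Finset.sum_const, Finset.card_univ, smul_eq_mul, mul_one]
  -- duality
  have hdual : (∑ W : Submodule K V, p ^ (Module.finrank K W)) =
      ∑ W : Submodule K V, p ^ (2 * k - Module.finrank K W) := by
    set e := (Pi.basisFun K (Fin (2 * k))).toDualEquiv with he
    set σ : Submodule K V → Submodule K V :=
      fun W => W.dualAnnihilator.comap e.toLinearMap with hσ
    have hσd : ∀ W, Module.finrank K (σ W) = 2 * k - Module.finrank K W := by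
      intro W
      have h1 : Module.finrank K (σ W) = Module.finrank K W.dualAnnihilator := by
        show Module.finrank K (W.dualAnnihilator.comap e.toLinearMap) = _
        rw [Submodule.comap_equiv_eq_map_symm]
        exact LinearEquiv.finrank_map_eq _ _
      have h2 : Module.finrank K W.dualAnnihilator = Module.finrank K (V ⧸ W) :=
        ((Subspace.quotEquivAnnihilator W).finrank_eq).symm
      have h3 := Submodule.finrank_quotient_add_finrank W
      rw [hfr] at h3
      omega
    have hσinj : Function.Injective σ := by
      intro W W' h
      rw [hσ] at h
      exact Subspace.dualAnnihilator_inj.mp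
        (Submodule.comap_injective_of_surjective e.surjective h)
    have hσbij : Function.Bijective σ := Finite.injective_iff_bijective.mp hσinj
    refine Fintype.sum_bijective σ hσbij _ _ ?_
    intro W
    rw [hσd W]
    congr 1
    have := Submodule.finrank_le W
    rw [hfr] at this
    omega
  -- AM-GM bound
  have hbound : ∀ W : Submodule K V,
      2 * p ^ k ≤ p ^ (2 * k - Module.finrank K W) + p ^ (Module.finrank K W) := by
    intro W
    have hd : Module.finrank K W ≤ 2 * k := by
      have := Submodule.finrank_le W
      rwa [hfr] at this
    rcases le_or_gt (Module.finrank K W) k with h | h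
    · have := amgm_pow p (k - Module.finrank K W) (Module.finrank K W) hp.pos
      have h1 : k - Module.finrank K W + Module.finrank K W = k := by omega
      have h2 : 2 * (k - Module.finrank K W) + Module.finrank K W
          = 2 * k - Module.finrank K W := by omega
      rw [h1, h2] at this
      exact this
    · have := amgm_pow p (Module.finrank K W - k) (2 * k - Module.finrank K W) hp.pos
      have h1 : Module.finrank K W - k + (2 * k - Module.finrank K W) = k := by omega
      have h2 : 2 * (Module.finrank K W - k) + (2 * k - Module.finrank K W)
          = Module.finrank K W := by omega
      rw [h1, h2] at this
      omega
  -- combine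
  have hsum : p ^ k * Fintype.card (Submodule K V) ≤
      ∑ W : Submodule K V, p ^ (2 * k - Module.finrank K W) := by
    have h1 : ∑ _W : Submodule K V, 2 * p ^ k ≤
        ∑ W : Submodule K V, (p ^ (2 * k - Module.finrank K W) + p ^ (Module.finrank K W)) :=
      Finset.sum_le_sum fun W _ => hbound W
    rw [Finset.sum_add_distrib, ← hdual, Finset.sum_const, Finset.card_univ, smul_eq_mul] at h1
    have h2 : Fintype.card (Submodule K V) * (2 * p ^ k)
        = 2 * (p ^ k * Fintype.card (Submodule K V)) := by ring
    rw [h2] at h1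
    rw [← hdual]
    omega
  have hcardV : numSubspaces p (2 * k) = Fintype.card (Submodule K V) :=
    Nat.card_eq_fintype_card
  calc p ^ k * numSubspaces p (2 * k)
      ≤ (∑ W : Submodule K V, p ^ (2 * k - Module.finrank K W)) +
        Fintype.card (Submodule K V) := by
        rw [hcardV]; omega
    _ = Nat.card (Σ W : Submodule K V, Option (V ⧸ W)) := hsigma.symm
    _ ≤ numSubspaces p (2 * k + 1) := hinj
end

section
/- Let W be a t-dimensional F_p-vector space and W_0 ⊂ W a subspace of codimension 1. Then the number of subspaces of W not contained in W_0 is at least p^⌊t²/4⌋. -/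
open Module Submodule Set

theorem div4 (t : ℕ) : (t/2) * (t - t/2) = t^2/4 := by
  obtain ⟨m, rfl | rfl⟩ := Nat.even_or_odd' t
  · have h1 : 2*m/2 = m := by omega
    have hs : 2*m - m = m := by omega
    have h2 : (2*m)^2/4 = m*m := by have : (2*m)^2 = m*m*4 := by ring
                                    omega
    rw [h1, hs, h2]
  · have h1 : (2*m+1)/2 = m := by omega
    have hs : 2*m+1-m = m+1 := by omega
    have h2 : (2*m+1)^2/4 = m*(m+1) := by
      have : (2*m+1)^2 = (m*(m+1))*4+1 := by ring
      omega
    rw [h1, hs, h2]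

theorem count_subspaces_not_contained (p : ℕ) [Fact p.Prime]
    (W : Type*) [AddCommGroup W] [Module (ZMod p) W] [Module.Finite (ZMod p) W]
    (t : ℕ) (ht : 1 ≤ t) (hW : Module.finrank (ZMod p) W = t)
    (W₀ : Submodule (ZMod p) W) (hW₀ : Module.finrank (ZMod p) W₀ = t - 1) :
    p ^ (t ^ 2 / 4) ≤ Nat.card {U : Submodule (ZMod p) W // ¬ U ≤ W₀} := by
  haveI : NeZero p := ⟨(Fact.out : p.Prime).ne_zero⟩
  haveI : Finite W := Module.finite_of_finite (ZMod p)
  haveI : Finite (Submodule (ZMod p) W) :=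
    Finite.of_injective (fun U => (U : Set W)) SetLike.coe_injective
  -- W₀ ≠ ⊤
  have hne : W₀ ≠ ⊤ := by
    intro h
    rw [h, finrank_top, hW] at hW₀
    omega
  obtain ⟨v, -, hv⟩ := SetLike.exists_of_lt (hne.lt_top)
  -- handle t = 1
  rcases eq_or_lt_of_le ht with h1 | h2
  · have : t^2/4 = 0 := by rw [← h1]; norm_num
    rw [this, pow_zero]
    haveI : Nonempty {U : Submodule (ZMod p) W // ¬ U ≤ W₀} :=
      ⟨⊤, fun h => hne (top_le_iff.mp h)⟩
    exact Nat.card_pos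
  obtain ⟨s, rfl⟩ : ∃ s, t = s+1 := ⟨t-1, by omega⟩
  have hs1 : s + 1 - 1 = s := by omega
  rw [hs1] at hW₀
  set b := (s+1)/2 with hbdef
  set c := (s+1) - b with hcdef
  have hb : 1 ≤ b := by omega
  have hbc : b + c = s + 1 := by omega
  have hbc4 : b * c = (s+1)^2/4 := div4 (s+1)
  -- basis of W₀ as family in W
  let fB := (Module.finBasis (ZMod p) W₀).reindex (finCongr hW₀)
  let f : Fin s → W := fun i => (fB i : W)
  have hf : LinearIndependent (ZMod p) f :=
    fB.linearIndependent.map' W₀.subtype (Submodule.ker_subtype W₀)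
  have hspan : span (ZMod p) (Set.range f) = W₀ := by
    have : Set.range f = W₀.subtype '' (Set.range fB) := by
      rw [← Set.range_comp]; rfl
    rw [this, ← Submodule.map_span, fB.span_eq, Submodule.map_top, Submodule.range_subtype]
  let e : Fin (s+1) → W := Fin.cons v f
  have he : LinearIndependent (ZMod p) e := by
    rw [linearIndependent_fin_cons]
    exact ⟨hf, by rw [hspan]; exact hv⟩
  have hcard : Fintype.card (Fin (s+1)) = finrank (ZMod p) W := by simp [hW]
  let B : Basis (Fin (s+1)) (ZMod p) W := basisOfLinearIndependentOfCardEqFinrank he hcard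
  have hBe : ⇑B = e := coe_basisOfLinearIndependentOfCardEqFinrank he hcard
  -- W₀ = ker of coordinate 0
  let φ : W →ₗ[ZMod p] ZMod p := B.coord 0
  have hφv : φ v = 1 := by
    have : v = B 0 := by rw [hBe]; rfl
    rw [this]
    simp [φ, Basis.coord_apply]
  have hle : W₀ ≤ LinearMap.ker φ := by
    rw [← hspan, Submodule.span_le]
    rintro x ⟨i, rfl⟩
    have : f i = B i.succ := by rw [hBe]; rfl
    simp only [SetLike.mem_coe, LinearMap.mem_ker, this, φ, Basis.coord_apply,
      Basis.repr_self, Finsupp.single_apply]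
    simp [Fin.succ_ne_zero]
  have hkerrank : finrank (ZMod p) (LinearMap.ker φ) = s := by
    have hsurj : Function.Surjective φ := fun a => ⟨a • v, by simp [hφv]⟩
    have := LinearMap.finrank_range_add_finrank_ker φ
    rw [LinearMap.range_eq_top.mpr hsurj, finrank_top, hW, finrank_self] at this
    omega
  have hker : W₀ = LinearMap.ker φ :=
    Submodule.eq_of_le_of_finrank_eq hle (by rw [hW₀, hkerrank])
  have hmem : ∀ w : W, w ∈ W₀ ↔ B.repr w 0 = 0 := by
    intro w
    rw [hker]
    simp [φ, LinearMap.mem_ker, Basis.coord_apply]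
  -- index embeddings
  let ri : Fin b → Fin (s+1) := fun i => ⟨i, by omega⟩
  let ci : Fin c → Fin (s+1) := fun j => ⟨b + j, by omega⟩
  have hric : ∀ i j, ri i ≠ ci j := by
    intro i j h
    have h1 := congrArg Fin.val h
    simp only [ri, ci] at h1
    omega
  have hrii : ∀ i k : Fin b, (ri i = ri k) ↔ i = k := by
    intro i k
    constructor
    · intro h; exact Fin.ext (by have := congrArg Fin.val h; simpa [ri] using this)
    · rintro rfl; rfl
  have hcii : ∀ i k : Fin c, (ci i = ci k) ↔ i = k := by
    intro i k
    constructor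
    · intro h; exact Fin.ext (by have := congrArg Fin.val h; simp only [ci] at this; omega)
    · rintro rfl; rfl
  let i0 : Fin b := ⟨0, hb⟩
  have hri0 : ri i0 = 0 := rfl
  -- the vectors and subspaces
  let u : (Fin b → Fin c → ZMod p) → Fin b → W :=
    fun M i => B (ri i) + ∑ j, M i j • B (ci j)
  have hrepr : ∀ M i ℓ, B.repr (u M i) ℓ =
      (if ri i = ℓ then 1 else 0) + ∑ j, M i j * (if ci j = ℓ then 1 else 0) := by
    intro M i ℓ
    simp [u, map_add, map_sum, map_smul, Finsupp.add_apply, Finsupp.finset_sum_apply,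
      Finsupp.smul_apply, Basis.repr_self, Finsupp.single_apply, smul_eq_mul]
  let U : (Fin b → Fin c → ZMod p) → Submodule (ZMod p) W :=
    fun M => span (ZMod p) (Set.range (u M))
  have hU₀ : ∀ M, ¬ U M ≤ W₀ := by
    intro M h
    have h1 : u M i0 ∈ W₀ := h (subset_span (Set.mem_range_self i0))
    rw [hmem, hrepr, ← hri0] at h1
    simp only [if_pos rfl] at h1
    rw [Finset.sum_eq_zero (fun j _ => by rw [if_neg (fun hh => hric i0 j hh.symm), mul_zero])] at h1
    simpa using h1
  have hinj : Function.Injective U := by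
    intro M N h
    funext i j
    have h1 : u M i ∈ U N := h ▸ subset_span (Set.mem_range_self i)
    rw [show U N = span (ZMod p) (Set.range (u N)) from rfl,
      mem_span_range_iff_exists_fun] at h1
    obtain ⟨d, hd⟩ := h1
    have key : ∀ ℓ, (∑ k, d k * B.repr (u N k) ℓ) = B.repr (u M i) ℓ := by
      intro ℓ
      rw [← hd]
      simp [map_sum, map_smul, Finsupp.finset_sum_apply, Finsupp.smul_apply, smul_eq_mul]
    have hval : ∀ (P : Fin b → Fin c → ZMod p) (m k : Fin b),
        B.repr (u P m) (ri k) = if m = k then 1 else 0 := by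
      intro P m k
      rw [hrepr, Finset.sum_eq_zero (fun j _ => by
        rw [if_neg (fun hh => hric k j hh.symm), mul_zero]), add_zero,
        if_congr (hrii m k) rfl rfl]
    have hval2 : ∀ (P : Fin b → Fin c → ZMod p) (m : Fin b) (j0 : Fin c),
        B.repr (u P m) (ci j0) = P m j0 := by
      intro P m j0
      rw [hrepr, if_neg (hric m j0), zero_add,
        Finset.sum_congr rfl (fun j _ => by rw [if_congr (hcii j j0) rfl rfl])]
      simp
    have hdk : ∀ k, d k = if i = k then 1 else 0 := by
      intro k
      have hk := key (ri k)
      rw [hval M i k, Finset.sum_congr rfl (fun m _ => by rw [hval N m k])] at hk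
      simpa using hk
    have h2 := key (ci j)
    rw [hval2 M i j, Finset.sum_congr rfl (fun k _ => by rw [hval2 N k j, hdk k])] at h2
    rw [← h2]
    simp
  calc p ^ ((s+1)^2/4) = p ^ (b*c) := by rw [hbc4]
    _ = Nat.card (Fin b → Fin c → ZMod p) := by
        simp [Nat.card_eq_fintype_card, Fintype.card_fun, ZMod.card, ← pow_mul, mul_comm]
    _ ≤ Nat.card {U : Submodule (ZMod p) W // ¬ U ≤ W₀} :=
        Nat.card_le_card_of_injective (fun M => ⟨U M, hU₀ M⟩)
          (fun M N hMN => hinj (congrArg Subtype.val hMN))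
end
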